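/- Let p and k be positive integers and let * denote the stuffle product (the t = 0 specialization of the t-stuffle product). Then Σ_{m+n=k, m,n ≥ 0} (−1)^m (z_p^m * z_p^n) equals 0 if k is odd, and equals (−1)^{k/2} z_{2p}^{k/2} if k is even. -/

import Mathlib

/- ℍ = ℚ⟨x,y⟩, z_k = x^{k-1}y, and the stuffle (harmonic) product * on the word
basis of ℍ¹ (a ℚ-bilinear map is determined by its values on words). -/

noncomputable section

open Finset

abbrev A : Type := FreeAlgebra ℚ Bool

def Xg : A := FreeAlgebra.ι ℚ false
def Yg : A := FreeAlgebra.ι ℚ true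

/-- `z k = x^(k-1) y`. -/
def z (k : ℕ) : A := Xg ^ (k - 1) * Yg

/-- The word `z_{k₁} ⋯ z_{kₙ}`. -/
def zw (w : List ℕ) : A := (w.map z).prod

/-- The stuffle (harmonic) product, given on the word basis of ℍ¹. -/
def hst : List ℕ → List ℕ → A
  | [], w => zw w
  | k :: w₁, [] => zw (k :: w₁)
  | k :: w₁, l :: w₂ =>
      z k * hst w₁ (l :: w₂) + z l * hst (k :: w₁) w₂ + z (k + l) * hst w₁ w₂
  termination_by w₁ w₂ => w₁.length + w₂.length

lemma zw_nil : zw [] = 1 := rfl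
lemma zw_cons (a : ℕ) (w : List ℕ) : zw (a :: w) = z a * zw w := by simp [zw]
lemma zw_replicate (n a : ℕ) : zw (List.replicate n a) = z a ^ n := by
  induction n with
  | zero => rfl
  | succ n ih => rw [List.replicate_succ, zw_cons, ih, pow_succ']

lemma hst_nil_left (w : List ℕ) : hst [] w = zw w := by cases w <;> simp [hst]
lemma hst_nil_right (w : List ℕ) : hst w [] = zw w := by cases w <;> simp [hst]

lemma hst_rep_succ_succ (p m n : ℕ) :
    hst (List.replicate (m+1) p) (List.replicate (n+1) p) =
      z p * hst (List.replicate m p) (List.replicate (n+1) p) +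
      z p * hst (List.replicate (m+1) p) (List.replicate n p) +
      z (2*p) * hst (List.replicate m p) (List.replicate n p) := by
  rw [List.replicate_succ, List.replicate_succ (n := n)]
  rw [show (2*p) = p + p by ring]
  exact hst.eq_3 p (List.replicate m p) p (List.replicate n p)

def S (p k : ℕ) : A :=
  ∑ m ∈ range (k+1), ((-1:ℚ)^m) • hst (List.replicate m p) (List.replicate (k-m) p)

lemma S_zero (p : ℕ) : S p 0 = 1 := by
  simp [S, hst_nil_left, zw_nil]

lemma S_one (p : ℕ) : S p 1 = 0 := by
  rw [S]
  rw [Finset.sum_range_succ, Finset.sum_range_succ, Finset.sum_range_zero]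
  simp [hst_nil_left, hst_nil_right, zw_replicate]

lemma S_key (p k : ℕ) : S p (k+2) = - (z (2*p) * S p k) := by
  have hrw : ∀ i ∈ range (k+1),
      ((-1:ℚ)^(i+1)) • hst (List.replicate (i+1) p) (List.replicate (k+2-(i+1)) p) =
        (-((-1:ℚ)^i)) • (z p * hst (List.replicate i p) (List.replicate (k+1-i) p))
        + ((-1:ℚ)^(i+1)) • (z p * hst (List.replicate (i+1) p) (List.replicate (k+1-(i+1)) p))
        + (-((-1:ℚ)^i)) • (z (2*p) * hst (List.replicate i p) (List.replicate (k-i) p)) := by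
    intro i hi
    rw [Finset.mem_range] at hi
    have h1 : k+2-(i+1) = (k-i)+1 := by omega
    have h2 : k+1-i = (k-i)+1 := by omega
    have h3 : k+1-(i+1) = k-i := by omega
    rw [h1, h2, h3, hst_rep_succ_succ, smul_add, smul_add]
    rw [pow_succ]
    ring_nf
  rw [S]
  rw [Finset.sum_range_succ, Finset.sum_range_succ']
  rw [Finset.sum_congr rfl hrw]
  rw [Finset.sum_add_distrib, Finset.sum_add_distrib]
  -- Sum1 : ∑ i in range (k+1), (-(-1)^i) • (z p * H i (k+1-i))
  have hsum1 : ∑ i ∈ range (k+1),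
      (-((-1:ℚ)^i)) • (z p * hst (List.replicate i p) (List.replicate (k+1-i) p)) =
      - (z p * (S p (k+1) - ((-1:ℚ)^(k+1)) • hst (List.replicate (k+1) p) (List.replicate 0 p))) := by
    have : S p (k+1) = (∑ i ∈ range (k+1),
        ((-1:ℚ)^i) • hst (List.replicate i p) (List.replicate (k+1-i) p))
        + ((-1:ℚ)^(k+1)) • hst (List.replicate (k+1) p) (List.replicate (k+1-(k+1)) p) := by
      rw [S, Finset.sum_range_succ]
    rw [this]
    simp only [Nat.sub_self]
    rw [add_sub_cancel_right, Finset.mul_sum, ← Finset.sum_neg_distrib]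
    refine Finset.sum_congr rfl fun i _ => ?_
    rw [mul_smul_comm, neg_smul]
  -- Sum2 : ∑ i in range (k+1), (-1)^(i+1) • (z p * H (i+1) (k+1-(i+1)))
  have hsum2 : ∑ i ∈ range (k+1),
      ((-1:ℚ)^(i+1)) • (z p * hst (List.replicate (i+1) p) (List.replicate (k+1-(i+1)) p)) =
      z p * S p (k+1) - ((-1:ℚ)^0) • (z p * hst (List.replicate 0 p) (List.replicate (k+1) p)) := by
    have hre := Finset.sum_range_succ' (fun j => ((-1:ℚ)^j) • (z p * hst (List.replicate j p) (List.replicate (k+1-j) p))) (k+1)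
    have hS : z p * S p (k+1) = ∑ j ∈ range (k+2),
        ((-1:ℚ)^j) • (z p * hst (List.replicate j p) (List.replicate (k+1-j) p)) := by
      rw [S, Finset.mul_sum]
      exact Finset.sum_congr rfl fun i _ => (mul_smul_comm _ _ _)
    rw [hS, hre]
    simp
  -- Sum3
  have hsum3 : ∑ i ∈ range (k+1),
      (-((-1:ℚ)^i)) • (z (2*p) * hst (List.replicate i p) (List.replicate (k-i) p)) =
      - (z (2*p) * S p k) := by
    rw [S, Finset.mul_sum, ← Finset.sum_neg_distrib]
    refine Finset.sum_congr rfl fun i _ => ?_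
    rw [mul_smul_comm, neg_smul]
  rw [hsum1, hsum2, hsum3]
  -- boundary terms
  have hb0 : ((-1:ℚ)^0) • hst (List.replicate 0 p) (List.replicate (k+2-0) p) =
      ((-1:ℚ)^0) • (z p * hst (List.replicate 0 p) (List.replicate (k+1) p)) := by
    simp only [List.replicate, hst_nil_left]
    simp [zw_cons]
    rw [List.replicate_succ, List.replicate_succ, zw_cons, zw_cons]
  have hbtop : ((-1:ℚ)^(k+2)) • hst (List.replicate (k+2) p) (List.replicate (k+2-(k+2)) p) =
      - (((-1:ℚ)^(k+1)) • (z p * hst (List.replicate (k+1) p) (List.replicate 0 p))) := by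
    rw [Nat.sub_self]
    simp only [List.replicate, hst_nil_right]
    rw [zw_cons, pow_succ]
    rw [mul_comm ((-1:ℚ)^(k+1)) (-1:ℚ), mul_smul, neg_one_smul]
  rw [hb0, hbtop]
  rw [mul_sub, mul_smul_comm]
  abel

lemma S_val (p k : ℕ) : S p k =
    if Odd k then 0 else ((-1:ℚ)^(k/2)) • zw (List.replicate (k/2) (2*p)) := by
  induction k using Nat.twoStepInduction with
  | zero => simp [S_zero, zw_nil]
  | one => simp [S_one]
  | more k ih _ =>
    rw [S_key, ih]
    by_cases h : Odd k
    · have h2 : Odd (k+2) := by rcases h with ⟨j, hj⟩; exact ⟨j+1, by omega⟩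
      simp [h, h2]
    · have h2 : ¬ Odd (k+2) := by
        intro ⟨j, hj⟩; exact h ⟨j-1, by omega⟩
      have hdiv : (k+2)/2 = k/2 + 1 := by omega
      simp only [h, h2, if_false, hdiv]
      rw [zw_replicate, zw_replicate, mul_smul_comm, pow_succ, pow_succ']
      rw [mul_comm ((-1:ℚ)^(k/2)) (-1:ℚ), mul_smul, neg_one_smul]


/-- for positive p, k, `Σ_{m+n=k} (-1)^m (z_p^m * z_p^n)` is 0 for
odd k and equals `(-1)^{k/2} z_{2p}^{k/2}` for even k. -/
theorem alternating_sum_stuffle (p k : ℕ) (hp : 1 ≤ p) (hk : 1 ≤ k) :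
    ∑ mn ∈ Finset.HasAntidiagonal.antidiagonal k,
        ((-1 : ℚ) ^ mn.1) • hst (List.replicate mn.1 p) (List.replicate mn.2 p) =
      if Odd k then 0
      else ((-1 : ℚ) ^ (k / 2)) • zw (List.replicate (k / 2) (2 * p)) := by
  rw [Finset.Nat.sum_antidiagonal_eq_sum_range_succ_mk]
  exact S_val p k
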